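/- arXiv:1008.0850 — 2 statements merged into one kernel-verified Lean document; each statement's English description precedes it below -/
import Mathlib

section
/- Let S be a subset of [0,1] with 0,1 ∈ S. Then S + ℤ is an additive subgroup of ℝ if and only if for all α, β ∈ S with α ≤ β, we have β - α ∈ S. -/
/-!
Write `S + ℤ` for the set of integer translates of `S`. If `0, 1 ∈ S ⊆ [0, 1]`, then
`(S + ℤ) ∩ [0, 1] = S`: a translate `s + n` landing in `[0, 1]` has `n ∈ {-1, 0, 1}`, and the
cases `n = ±1` only produce the endpoints. So if `S + ℤ` is a group, `β - α ∈ (S + ℤ) ∩ [0, 1] = S`.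
Conversely, closure of `S` under differences makes it closed under `s ↦ 1 - s`, and then
`s - t` is either `(s - t) + 0` with `s - t ∈ S`, or `(1 - (t - s)) - 1` with `1 - (t - s) ∈ S`;
hence `S + ℤ` is closed under subtraction.
-/

section IntTranslates

variable {R : Type*}

def intTranslates [AddGroupWithOne R] (S : Set R) : Set R := {x | ∃ s ∈ S, ∃ n : ℤ, x = s + n}

theorem subset_intTranslates [AddGroupWithOne R] {S : Set R} : S ⊆ intTranslates S :=
  fun s hs => ⟨s, hs, 0, by simp⟩

theorem mem_of_mem_intTranslates_of_mem_Icc [CommRing R] [LinearOrder R] [IsStrictOrderedRing R]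
    {S : Set R} (hS : S ⊆ Set.Icc 0 1) (h0 : (0 : R) ∈ S)
    (h1 : (1 : R) ∈ S) {x : R} (hx : x ∈ intTranslates S) (hx01 : x ∈ Set.Icc 0 1) : x ∈ S := by
  obtain ⟨s, hs, n, rfl⟩ := hx
  obtain ⟨hs0, hs1⟩ := hS hs
  obtain ⟨hx0, hx1⟩ := hx01
  have hn_lower : -1 ≤ n := by
    have : ((-1 : ℤ) : R) ≤ n := by push_cast; linarith
    exact_mod_cast this
  have hn_upper : n ≤ 1 := by
    have : (n : R) ≤ ((1 : ℤ) : R) := by push_cast; linarith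
    exact_mod_cast this
  interval_cases n
  · have : s + ((-1 : ℤ) : R) = 0 := by push_cast at hx0 ⊢; linarith
    rwa [this]
  · simpa using hs
  · have : s + ((1 : ℤ) : R) = 1 := by push_cast at hx1 ⊢; linarith
    rwa [this]

theorem sub_mem_intTranslates [AddCommGroupWithOne R] [LinearOrder R] {S : Set R}
    (hS : S ⊆ Set.Icc 0 1) (h1 : (1 : R) ∈ S)
    (hsub : ∀ α ∈ S, ∀ β ∈ S, α ≤ β → β - α ∈ S) {x y : R}
    (hx : x ∈ intTranslates S) (hy : y ∈ intTranslates S) : x - y ∈ intTranslates S := by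
  obtain ⟨s, hs, n, rfl⟩ := hx
  obtain ⟨t, ht, m, rfl⟩ := hy
  rcases le_total t s with hts | hst
  · exact ⟨s - t, hsub t ht s hs hts, n - m, by push_cast; abel⟩
  · have hdiff : t - s ∈ S := hsub s hs t ht hst
    refine ⟨1 - (t - s), hsub _ hdiff 1 h1 (hS hdiff).2, n - m - 1, ?_⟩
    push_cast; abel

end IntTranslates

theorem stmt_0 (S : Set ℝ) (hS : S ⊆ Set.Icc 0 1) (h0 : (0:ℝ) ∈ S) (h1 : (1:ℝ) ∈ S) :
    (∃ G : AddSubgroup ℝ, (G : Set ℝ) = {x : ℝ | ∃ s ∈ S, ∃ n : ℤ, x = s + n}) ↔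
      (∀ α ∈ S, ∀ β ∈ S, α ≤ β → β - α ∈ S) := by
  change (∃ G : AddSubgroup ℝ, (G : Set ℝ) = intTranslates S) ↔ _
  constructor
  · rintro ⟨G, hG⟩ α hα β hβ hαβ
    have hS_G : ∀ s ∈ S, s ∈ G := fun s hs => by
      rw [← SetLike.mem_coe, hG]; exact subset_intTranslates hs
    have hdiff : β - α ∈ (G : Set ℝ) := sub_mem (hS_G β hβ) (hS_G α hα)
    rw [hG] at hdiff
    exact mem_of_mem_intTranslates_of_mem_Icc hS h0 h1 hdiff
      ⟨sub_nonneg.2 hαβ, by linarith [(hS hβ).2, (hS hα).1]⟩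
  · intro hsub
    refine ⟨AddSubgroup.ofSub _ ⟨0, subset_intTranslates h0⟩ fun x hx y hy => ?_, rfl⟩
    simpa only [← sub_eq_add_neg] using sub_mem_intTranslates hS h1 hsub hx hy
end

section
/- Let λ ≥ 2 and q ≥ 1 be integers, and let S = {m/(q λ^N) : N ∈ ℕ, 0 ≤ m ≤ q λ^N, m ∈ ℤ}. Then S is multiplicatively closed (i.e., y₁, y₂ ∈ S implies y₁ y₂ ∈ S) if and only if there exists K ∈ ℕ such that q divides λ^K. -/
/-!
Clearing denominators, `x` lies in `S` exactly when `0 ≤ x ≤ 1` and `x * q * λ^N` is an integer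
for some `N`. If `λ^K = q c`, a product of two such points becomes integral after multiplying by
`q λ^(N₁ + N₂ + K)`, so `S` is closed under products. Conversely, `1/q ∈ S`, and if `1/q²` is in
`S` then `λ^N / q` is an integer for some `N`.
-/

open Set

def adicGrid (q lam : ℕ) : Set ℝ :=
  {x | ∃ N : ℕ, ∃ m : ℤ, 0 ≤ m ∧ m ≤ (q : ℤ) * lam ^ N ∧ x = m / (q * lam ^ N)}

namespace adicGrid

variable {q lam : ℕ} {x y : ℝ}

theorem mem_iff (hq : q ≠ 0) (hlam : lam ≠ 0) :
    x ∈ adicGrid q lam ↔ x ∈ Icc 0 1 ∧ ∃ N : ℕ, ∃ m : ℤ, x * (q * lam ^ N) = m := by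
  refine ⟨?_, ?_⟩
  · rintro ⟨N, m, hm0, hmle, rfl⟩
    have hd : (0 : ℝ) < q * lam ^ N := by positivity
    refine ⟨⟨div_nonneg (by exact_mod_cast hm0) hd.le, (div_le_one hd).2 (by exact_mod_cast hmle)⟩,
      N, m, div_mul_cancel₀ _ hd.ne'⟩
  · rintro ⟨⟨hx0, hx1⟩, N, m, hm⟩
    have hd : (0 : ℝ) < q * lam ^ N := by positivity
    have hx : x = m / (q * lam ^ N) := (eq_div_iff hd.ne').2 hm
    refine ⟨N, m, ?_, ?_, hx⟩
    · exact_mod_cast hm ▸ mul_nonneg hx0 hd.le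
    · exact_mod_cast hm ▸ mul_le_of_le_one_left hd.le hx1

theorem inv_mem (hq : q ≠ 0) (hlam : lam ≠ 0) : (q : ℝ)⁻¹ ∈ adicGrid q lam :=
  (mem_iff hq hlam).2
    ⟨⟨by positivity, inv_le_one_of_one_le₀ (by exact_mod_cast Nat.one_le_iff_ne_zero.2 hq)⟩,
      0, 1, by simp [hq]⟩

theorem mul_mem (hq : q ≠ 0) (hlam : lam ≠ 0) {K : ℕ} (hK : q ∣ lam ^ K)
    (hx : x ∈ adicGrid q lam) (hy : y ∈ adicGrid q lam) : x * y ∈ adicGrid q lam := by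
  obtain ⟨hxI, N₁, m₁, hm₁⟩ := (mem_iff hq hlam).1 hx
  obtain ⟨hyI, N₂, m₂, hm₂⟩ := (mem_iff hq hlam).1 hy
  obtain ⟨c, hc⟩ := hK
  have hcR : (lam : ℝ) ^ K = q * c := by exact_mod_cast hc
  refine (mem_iff hq hlam).2 ⟨unitInterval.mul_mem hxI hyI, N₁ + N₂ + K, m₁ * m₂ * c, ?_⟩
  calc x * y * (q * lam ^ (N₁ + N₂ + K))
      = (x * (q * lam ^ N₁)) * (y * (q * lam ^ N₂)) * (lam ^ K / q) := by
        field_simp; ring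
    _ = ((m₁ * m₂ * c : ℤ) : ℝ) := by rw [hm₁, hm₂, hcR]; field_simp; push_cast; ring

theorem exists_dvd_pow_of_inv_mul_inv_mem (hq : q ≠ 0) (hlam : lam ≠ 0)
    (h : (q : ℝ)⁻¹ * (q : ℝ)⁻¹ ∈ adicGrid q lam) : ∃ K : ℕ, q ∣ lam ^ K := by
  obtain ⟨-, N, m, hm⟩ := (mem_iff hq hlam).1 h
  have hmR : ((lam ^ N : ℕ) : ℝ) = (m * q : ℤ) := by
    push_cast
    rw [← hm]
    field_simp
  refine ⟨N, Int.natCast_dvd_natCast.1 ⟨m, ?_⟩⟩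
  rw [mul_comm]
  exact_mod_cast hmR

theorem mulClosed_iff (hq : q ≠ 0) (hlam : lam ≠ 0) :
    (∀ y₁ ∈ adicGrid q lam, ∀ y₂ ∈ adicGrid q lam, y₁ * y₂ ∈ adicGrid q lam) ↔
      ∃ K : ℕ, q ∣ lam ^ K :=
  ⟨fun h => exists_dvd_pow_of_inv_mul_inv_mem hq hlam (h _ (inv_mem hq hlam) _ (inv_mem hq hlam)),
    fun ⟨_, hK⟩ _ hx _ hy => mul_mem hq hlam hK hx hy⟩

end adicGrid

theorem stmt_8 (lam q : ℕ) (hlam : 2 ≤ lam) (hq : 1 ≤ q) :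
    (∀ y₁ ∈ {x : ℝ | ∃ N : ℕ, ∃ m : ℤ, 0 ≤ m ∧ m ≤ (q : ℤ) * lam ^ N ∧ x = m / (q * lam ^ N)},
     ∀ y₂ ∈ {x : ℝ | ∃ N : ℕ, ∃ m : ℤ, 0 ≤ m ∧ m ≤ (q : ℤ) * lam ^ N ∧ x = m / (q * lam ^ N)},
      y₁ * y₂ ∈ {x : ℝ | ∃ N : ℕ, ∃ m : ℤ, 0 ≤ m ∧ m ≤ (q : ℤ) * lam ^ N ∧ x = m / (q * lam ^ N)})
    ↔ ∃ K : ℕ, q ∣ lam ^ K :=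
  adicGrid.mulClosed_iff (by omega) (by omega)
end
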